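/- Up-to-sign invariance of the radical vector expression: let B be a 3×3 skew-symmetrizable matrix with skew-symmetrizer diag(d_1,d_2,d_3), define u(B) = (d_2|B_{23}|, d_3|B_{31}|, d_1|B_{12}|) if the diagram of B is cyclic, and u(B) = (±d_2|B_{23}|, ±d_3|B_{31}|, ±d_1|B_{12}|) with the source and sink coordinates of the same sign and the third coordinate opposite, if the diagram is acyclic. If (c',B') is any Y-seed obtained from the initial seed (c_0,B) by mutations along which sign coherence holds, and u(B') = (a',b',c''), then a'·c'_1 + b'·c'_2 + c''·c'_3 = ±u(B). -/
import Mathlib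


open Matrix BigOperators

/-- Matrix mutation in direction `k`. -/
def mutate {n : ℕ} (B : Matrix (Fin n) (Fin n) ℤ) (k : Fin n) : Matrix (Fin n) (Fin n) ℤ :=
  fun i j =>
    if i = k ∨ j = k then -B i j
    else B i j + max (B i k) 0 * max (B k j) 0 - max (-B i k) 0 * max (-B k j) 0

/-- A vector is sign coherent: nonzero and entrywise nonnegative or entrywise nonpositive. -/
def signCoherent {n : ℕ} (c : Fin n → ℤ) : Prop :=
  c ≠ 0 ∧ ((∀ j, 0 ≤ c j) ∨ (∀ j, c j ≤ 0))

/-- The sign of a sign-coherent vector. -/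
def sgn {n : ℕ} (c : Fin n → ℤ) : ℤ :=
  if ∀ j, 0 ≤ c j then 1 else -1

/-- Mutation of the tuple of c-vectors. -/
def cmut {n : ℕ} (B : Matrix (Fin n) (Fin n) ℤ) (k : Fin n)
    (c : Fin n → Fin n → ℤ) : Fin n → Fin n → ℤ :=
  fun i => if i = k then -c k else c i + max (sgn (c k) * B k i) 0 • c k

/-- Y-seed mutation on a pair (c, B). -/
def ymut {n : ℕ} (s : (Fin n → Fin n → ℤ) × Matrix (Fin n) (Fin n) ℤ) (k : Fin n) :
    (Fin n → Fin n → ℤ) × Matrix (Fin n) (Fin n) ℤ :=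
  (cmut s.2 k s.1, mutate s.2 k)

/-- `d` is a skew-symmetrizer of `B`. -/
def skewSymmetrizer {n : ℕ} (d : Fin n → ℤ) (B : Matrix (Fin n) (Fin n) ℤ) : Prop :=
  (∀ i, 0 < d i) ∧ ∀ i j, d i * B i j = -(d j * B j i)

/-- The diagram of a 3×3 matrix is cyclic: all of B₂₁, B₃₂, B₁₃ are nonzero with equal signs. -/
def isCyclic (B : Matrix (Fin 3) (Fin 3) ℤ) : Prop :=
  (0 < B 1 0 ∧ 0 < B 2 1 ∧ 0 < B 0 2) ∨ (B 1 0 < 0 ∧ B 2 1 < 0 ∧ B 0 2 < 0)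

/-- The radical vector (d₂|B₂₃|, d₃|B₃₁|, d₁|B₁₂|) for a cyclic 3×3 matrix. -/
def ucyc (B : Matrix (Fin 3) (Fin 3) ℤ) (d : Fin 3 → ℤ) : Fin 3 → ℤ :=
  ![d 1 * |B 1 2|, d 2 * |B 2 0|, d 0 * |B 0 1|]

/-- `s` is a source of the diagram of `B`: no edges point into `s`. -/
def isSource (B : Matrix (Fin 3) (Fin 3) ℤ) (s : Fin 3) : Prop := ∀ i, i ≠ s → B s i ≤ 0

/-- `t` is a sink of the diagram of `B`: no edges point out of `t`. -/
def isSink (B : Matrix (Fin 3) (Fin 3) ℤ) (t : Fin 3) : Prop := ∀ i, i ≠ t → 0 ≤ B t i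

/-- The standard basis of ℤ^n as a tuple of c-vectors. -/
def stdc (n : ℕ) : Fin n → Fin n → ℤ := fun i j => if i = j then 1 else 0

/-- The radical vector `u(B)` up to the allowed sign choices. -/
def uChoice (B : Matrix (Fin 3) (Fin 3) ℤ) (d : Fin 3 → ℤ) (u : Fin 3 → ℤ) : Prop :=
  (isCyclic B ∧ u = ucyc B d) ∨
    (¬ isCyclic B ∧ ∃ (ε : Fin 3 → ℤ) (s t m : Fin 3),
      s ≠ t ∧ s ≠ m ∧ t ≠ m ∧ isSource B s ∧ isSink B t ∧
      (∀ i, ε i = 1 ∨ ε i = -1) ∧ ε s = ε t ∧ ε m = -ε s ∧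
      u = fun i => ε i * ucyc B d i)


lemma pos_mul_max {c x : ℤ} (hc : 0 < c) : c * max x 0 = max (c * x) 0 := by
  rcases le_total x 0 with h | h
  · rw [max_eq_right h, max_eq_right (by nlinarith), mul_zero]
  · rw [max_eq_left h, max_eq_left (by nlinarith)]

lemma mm {ε : ℤ} (hε : ε = 1 ∨ ε = -1) (x y : ℤ) :
    max x 0 * max y 0 - max (-x) 0 * max (-y) 0 =
      max (ε * x) 0 * y + x * max (-(ε * y)) 0 := by
  have key : ∀ a b : ℤ, max a 0 * max b 0 - max (-a) 0 * max (-b) 0 = max a 0 * b + a * max (-b) 0 := by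
    intro a b
    rcases le_total a 0 with ha | ha <;> rcases le_total b 0 with hb | hb
    · rw [max_eq_right ha, max_eq_right hb, max_eq_left (neg_nonneg.mpr ha),
        max_eq_left (neg_nonneg.mpr hb)]; ring
    · rw [max_eq_right ha, max_eq_left hb, max_eq_left (neg_nonneg.mpr ha),
        max_eq_right (neg_nonpos.mpr hb)]; ring
    · rw [max_eq_left ha, max_eq_right hb, max_eq_right (neg_nonpos.mpr ha),
        max_eq_left (neg_nonneg.mpr hb)]; ring
    · rw [max_eq_left ha, max_eq_left hb, max_eq_right (neg_nonpos.mpr ha),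
        max_eq_right (neg_nonpos.mpr hb)]; ring
  rcases hε with rfl | rfl
  · simpa using key x y
  · have := key (-x) (-y)
    simp only [neg_neg] at this
    simp only [neg_one_mul, neg_neg]
    linarith [this]

lemma mdiff {ε : ℤ} (hε : ε = 1 ∨ ε = -1) (x : ℤ) :
    max (ε * x) 0 - max (-(ε * x)) 0 = ε * x := by
  rcases le_total (ε * x) 0 with h | h
  · rw [max_eq_right h, max_eq_left (by linarith)]; ring
  · rw [max_eq_left h, max_eq_right (by linarith)]; ring

lemma skew_diag {n : ℕ} {d : Fin n → ℤ} {B : Matrix (Fin n) (Fin n) ℤ}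
    (hd : skewSymmetrizer d B) (i : Fin n) : B i i = 0 := by
  have h := hd.2 i i
  have hp := hd.1 i
  have h0 : d i * B i i = 0 := by linarith
  rcases mul_eq_zero.1 h0 with h | h
  · exact absurd h (by linarith)
  · exact h

lemma skew_mutate {n : ℕ} {d : Fin n → ℤ} {B : Matrix (Fin n) (Fin n) ℤ}
    (hd : skewSymmetrizer d B) (k : Fin n) : skewSymmetrizer d (mutate B k) := by
  refine ⟨hd.1, fun i j => ?_⟩
  unfold mutate
  by_cases hik : i = k
  · subst hik
    rw [if_pos (Or.inl rfl), if_pos (Or.inr rfl)]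
    have := hd.2 i j
    ring_nf
    linarith
  · by_cases hjk : j = k
    · subst hjk
      rw [if_pos (Or.inr rfl), if_pos (Or.inl rfl)]
      have := hd.2 i j
      ring_nf
      linarith
    · rw [if_neg (by tauto), if_neg (by tauto)]
      have h1 : d i * max (B i k) 0 = d k * max (-(B k i)) 0 := by
        rw [pos_mul_max (hd.1 i), pos_mul_max (hd.1 k), hd.2 i k]; ring_nf
      have h2 : d i * max (-(B i k)) 0 = d k * max (B k i) 0 := by
        rw [pos_mul_max (hd.1 i), pos_mul_max (hd.1 k)]
        congr 1
        have := hd.2 i k; linarith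
      have h3 : d j * max (B j k) 0 = d k * max (-(B k j)) 0 := by
        rw [pos_mul_max (hd.1 j), pos_mul_max (hd.1 k), hd.2 j k]; ring_nf
      have h4 : d j * max (-(B j k)) 0 = d k * max (B k j) 0 := by
        rw [pos_mul_max (hd.1 j), pos_mul_max (hd.1 k)]
        congr 1
        have := hd.2 j k; linarith
      have h5 := hd.2 i j
      linear_combination h5 + max (B k j) 0 * h1 - max (-(B k j)) 0 * h2 +
        max (B k i) 0 * h3 - max (-(B k i)) 0 * h4

/-- The signed radical vector. -/
def vB (B : Matrix (Fin 3) (Fin 3) ℤ) (d : Fin 3 → ℤ) : Fin 3 → ℤ :=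
  ![d 1 * B 1 2, d 2 * B 2 0, d 0 * B 0 1]

lemma kernel_v {B : Matrix (Fin 3) (Fin 3) ℤ} {d : Fin 3 → ℤ}
    (hd : skewSymmetrizer d B) (i : Fin 3) : ∑ j, B i j * vB B d j = 0 := by
  have h00 := skew_diag hd 0
  have h11 := skew_diag hd 1
  have h22 := skew_diag hd 2
  fin_cases i
  · show ∑ j, B 0 j * vB B d j = 0
    simp only [vB, Fin.sum_univ_three, Matrix.cons_val_zero, Matrix.cons_val_one,
      Matrix.head_cons, Matrix.cons_val_two, Matrix.tail_cons]
    linear_combination (d 1 * B 1 2) * h00 + B 0 1 * hd.2 2 0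
  · show ∑ j, B 1 j * vB B d j = 0
    simp only [vB, Fin.sum_univ_three, Matrix.cons_val_zero, Matrix.cons_val_one,
      Matrix.head_cons, Matrix.cons_val_two, Matrix.tail_cons]
    linear_combination (d 2 * B 2 0) * h11 + B 1 2 * hd.2 0 1
  · show ∑ j, B 2 j * vB B d j = 0
    simp only [vB, Fin.sum_univ_three, Matrix.cons_val_zero, Matrix.cons_val_one,
      Matrix.head_cons, Matrix.cons_val_two, Matrix.tail_cons]
    linear_combination (d 0 * B 0 1) * h22 + B 2 0 * hd.2 1 2

lemma abs_v {B : Matrix (Fin 3) (Fin 3) ℤ} {d : Fin 3 → ℤ}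
    (hd : skewSymmetrizer d B) (i : Fin 3) : |vB B d i| = ucyc B d i := by
  fin_cases i
  · show |vB B d 0| = ucyc B d 0
    simp [vB, ucyc, abs_mul, abs_of_pos (hd.1 1)]
  · show |vB B d 1| = ucyc B d 1
    simp [vB, ucyc, abs_mul, abs_of_pos (hd.1 2)]
  · show |vB B d 2| = ucyc B d 2
    simp [vB, ucyc, abs_mul, abs_of_pos (hd.1 0)]

lemma skew_zero {B : Matrix (Fin 3) (Fin 3) ℤ} {d : Fin 3 → ℤ}
    (hd : skewSymmetrizer d B) {i j : Fin 3} (h : B j i = 0) : B i j = 0 := by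
  have h0 : d i * B i j = 0 := by rw [hd.2 i j, h]; ring
  have := hd.1 i
  rcases mul_eq_zero.1 h0 with h' | h'
  · linarith
  · exact h'

lemma Kuniq {B : Matrix (Fin 3) (Fin 3) ℤ} {d : Fin 3 → ℤ}
    (hd : skewSymmetrizer d B) {u1 u2 : Fin 3 → ℤ}
    (ha1 : ∀ i, |u1 i| = ucyc B d i) (ha2 : ∀ i, |u2 i| = ucyc B d i)
    (hk1 : ∀ i, ∑ j, B i j * u1 j = 0) (hk2 : ∀ i, ∑ j, B i j * u2 j = 0) :
    (∀ i, u1 i = u2 i) ∨ (∀ i, u1 i = -u2 i) := by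
  have hco : ∀ i, u1 i = u2 i ∨ u1 i = -u2 i := by
    intro i
    have : |u1 i| = |u2 i| := (ha1 i).trans (ha2 i).symm
    exact abs_eq_abs.1 this
  by_contra hcon
  push_neg at hcon
  obtain ⟨h1, h2⟩ := hcon
  obtain ⟨p, hp⟩ := h1
  obtain ⟨q, hq⟩ := h2
  have hpe : u1 p = -u2 p := (hco p).resolve_left hp
  have hqe : u1 q = u2 q := (hco q).resolve_right hq
  have hp0 : u2 p ≠ 0 := by
    intro h; apply hp; rw [hpe, h]; ring
  have hq0 : u2 q ≠ 0 := by
    intro h; apply hq; rw [hqe, h]; ring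
  have hpq : p ≠ q := by
    intro h; subst h; rw [hqe] at hpe; omega
  clear hp hq hco
  fin_cases p <;> fin_cases q <;> (try exact hpq rfl)
  -- (p,q) = (0,1), r = 2
  · have hpe' : u1 0 = -u2 0 := hpe
    have hqe' : u1 1 = u2 1 := hqe
    have e1 := hk1 2; have e2 := hk2 2
    rw [Fin.sum_univ_three] at e1 e2
    rw [hpe', hqe', skew_diag hd 2] at e1; rw [skew_diag hd 2] at e2
    have hrq : B 2 1 = 0 := by
      have h : B 2 1 * u2 1 + B 2 1 * u2 1 = 0 := by linarith
      exact (mul_eq_zero.1 (by linarith : B 2 1 * u2 1 = 0)).resolve_right hq0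
    have h12 : B 1 2 = 0 := skew_zero hd hrq
    apply hp0
    have habs : |u2 0| = 0 := by rw [ha2 0]; simp [ucyc, h12]
    exact abs_eq_zero.1 habs
  -- (p,q) = (0,2), r = 1
  · have hpe' : u1 0 = -u2 0 := hpe
    have hqe' : u1 2 = u2 2 := hqe
    have e1 := hk1 1; have e2 := hk2 1
    rw [Fin.sum_univ_three] at e1 e2
    rw [hpe', hqe', skew_diag hd 1] at e1; rw [skew_diag hd 1] at e2
    have hrq : B 1 2 = 0 := by
      exact (mul_eq_zero.1 (by linarith : B 1 2 * u2 2 = 0)).resolve_right hq0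
    apply hp0
    have habs : |u2 0| = 0 := by rw [ha2 0]; simp [ucyc, hrq]
    exact abs_eq_zero.1 habs
  -- (p,q) = (1,0), r = 2
  · have hpe' : u1 1 = -u2 1 := hpe
    have hqe' : u1 0 = u2 0 := hqe
    have e1 := hk1 2; have e2 := hk2 2
    rw [Fin.sum_univ_three] at e1 e2
    rw [hpe', hqe', skew_diag hd 2] at e1; rw [skew_diag hd 2] at e2
    have hrq : B 2 0 = 0 := by
      exact (mul_eq_zero.1 (by linarith : B 2 0 * u2 0 = 0)).resolve_right hq0
    apply hp0
    have habs : |u2 1| = 0 := by rw [ha2 1]; simp [ucyc, hrq]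
    exact abs_eq_zero.1 habs
  -- (p,q) = (1,2), r = 0
  · have hpe' : u1 1 = -u2 1 := hpe
    have hqe' : u1 2 = u2 2 := hqe
    have e1 := hk1 0; have e2 := hk2 0
    rw [Fin.sum_univ_three] at e1 e2
    rw [hpe', hqe', skew_diag hd 0] at e1; rw [skew_diag hd 0] at e2
    have hrq : B 0 2 = 0 := by
      exact (mul_eq_zero.1 (by linarith : B 0 2 * u2 2 = 0)).resolve_right hq0
    have h20 : B 2 0 = 0 := skew_zero hd hrq
    apply hp0
    have habs : |u2 1| = 0 := by rw [ha2 1]; simp [ucyc, h20]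
    exact abs_eq_zero.1 habs
  -- (p,q) = (2,0), r = 1
  · have hpe' : u1 2 = -u2 2 := hpe
    have hqe' : u1 0 = u2 0 := hqe
    have e1 := hk1 1; have e2 := hk2 1
    rw [Fin.sum_univ_three] at e1 e2
    rw [hpe', hqe', skew_diag hd 1] at e1; rw [skew_diag hd 1] at e2
    have hrq : B 1 0 = 0 := by
      exact (mul_eq_zero.1 (by linarith : B 1 0 * u2 0 = 0)).resolve_right hq0
    have h01 : B 0 1 = 0 := skew_zero hd hrq
    apply hp0
    have habs : |u2 2| = 0 := by rw [ha2 2]; simp [ucyc, h01]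
    exact abs_eq_zero.1 habs
  -- (p,q) = (2,1), r = 0
  · have hpe' : u1 2 = -u2 2 := hpe
    have hqe' : u1 1 = u2 1 := hqe
    have e1 := hk1 0; have e2 := hk2 0
    rw [Fin.sum_univ_three] at e1 e2
    rw [hpe', hqe', skew_diag hd 0] at e1; rw [skew_diag hd 0] at e2
    have hrq : B 0 1 = 0 := by
      exact (mul_eq_zero.1 (by linarith : B 0 1 * u2 1 = 0)).resolve_right hq0
    apply hp0
    have habs : |u2 2| = 0 := by rw [ha2 2]; simp [ucyc, hrq]
    exact abs_eq_zero.1 habs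

lemma skew_nonneg {B : Matrix (Fin 3) (Fin 3) ℤ} {d : Fin 3 → ℤ}
    (hd : skewSymmetrizer d B) {i j : Fin 3} (h : B j i ≤ 0) : 0 ≤ B i j := by
  have h1 := hd.2 i j; have h2 := hd.1 i; have h3 := hd.1 j; nlinarith

lemma skew_nonpos {B : Matrix (Fin 3) (Fin 3) ℤ} {d : Fin 3 → ℤ}
    (hd : skewSymmetrizer d B) {i j : Fin 3} (h : 0 ≤ B j i) : B i j ≤ 0 := by
  have h1 := hd.2 i j; have h2 := hd.1 i; have h3 := hd.1 j; nlinarith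

lemma skew_neg {B : Matrix (Fin 3) (Fin 3) ℤ} {d : Fin 3 → ℤ}
    (hd : skewSymmetrizer d B) {i j : Fin 3} (h : 0 < B j i) : B i j < 0 := by
  have h1 := hd.2 i j; have h2 := hd.1 i; have h3 := hd.1 j; nlinarith

lemma skew_pos {B : Matrix (Fin 3) (Fin 3) ℤ} {d : Fin 3 → ℤ}
    (hd : skewSymmetrizer d B) {i j : Fin 3} (h : B j i < 0) : 0 < B i j := by
  have h1 := hd.2 i j; have h2 := hd.1 i; have h3 := hd.1 j; nlinarith

lemma uchoice_eq_v {B : Matrix (Fin 3) (Fin 3) ℤ} {d : Fin 3 → ℤ} {u : Fin 3 → ℤ}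
    (hd : skewSymmetrizer d B) (hu : uChoice B d u) :
    (∀ i, u i = vB B d i) ∨ (∀ i, u i = -vB B d i) := by
  rcases hu with ⟨hcyc, hueq⟩ | ⟨-, ε, s, t, m, hst, hsm, htm, hsrc, hsink, hε, hεst, hεm, hueq⟩
  · subst hueq
    rcases hcyc with ⟨h10, h21, h02⟩ | ⟨h10, h21, h02⟩
    · have h01 : B 0 1 < 0 := skew_neg hd h10
      have h12 : B 1 2 < 0 := skew_neg hd h21
      have h20 : B 2 0 < 0 := skew_neg hd h02
      right; intro i; fin_cases i
      · show ucyc B d 0 = -vB B d 0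
        simp only [ucyc, vB, Matrix.cons_val_zero, Matrix.cons_val_one, Matrix.head_cons, Matrix.cons_val_two, Matrix.tail_cons]
        rw [abs_of_neg h12]; ring
      · show ucyc B d 1 = -vB B d 1
        simp only [ucyc, vB, Matrix.cons_val_zero, Matrix.cons_val_one, Matrix.head_cons, Matrix.cons_val_two, Matrix.tail_cons]
        rw [abs_of_neg h20]; ring
      · show ucyc B d 2 = -vB B d 2
        simp only [ucyc, vB, Matrix.cons_val_zero, Matrix.cons_val_one, Matrix.head_cons, Matrix.cons_val_two, Matrix.tail_cons]
        rw [abs_of_neg h01]; ring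
    · have h01 : 0 < B 0 1 := skew_pos hd h10
      have h12 : 0 < B 1 2 := skew_pos hd h21
      have h20 : 0 < B 2 0 := skew_pos hd h02
      left; intro i; fin_cases i
      · show ucyc B d 0 = vB B d 0
        simp only [ucyc, vB, Matrix.cons_val_zero, Matrix.cons_val_one, Matrix.head_cons, Matrix.cons_val_two, Matrix.tail_cons]
        rw [abs_of_pos h12]
      · show ucyc B d 1 = vB B d 1
        simp only [ucyc, vB, Matrix.cons_val_zero, Matrix.cons_val_one, Matrix.head_cons, Matrix.cons_val_two, Matrix.tail_cons]
        rw [abs_of_pos h20]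
      · show ucyc B d 2 = vB B d 2
        simp only [ucyc, vB, Matrix.cons_val_zero, Matrix.cons_val_one, Matrix.head_cons, Matrix.cons_val_two, Matrix.tail_cons]
        rw [abs_of_pos h01]
  · subst hueq
    fin_cases s <;> fin_cases t <;> (try exact absurd rfl hst) <;> fin_cases m <;>
      (try exact absurd rfl hsm) <;> (try exact absurd rfl htm)
    -- s=0, t=1, m=2
    · have h01 : B 0 1 ≤ 0 := hsrc 1 (by decide)
      have h02 : B 0 2 ≤ 0 := hsrc 2 (by decide)
      have h12 : 0 ≤ B 1 2 := hsink 2 (by decide)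
      have h20 : 0 ≤ B 2 0 := skew_nonneg hd h02
      have hεst' : ε 0 = ε 1 := hεst
      have hεm' : ε 2 = -ε 0 := hεm
      rcases hε 0 with ha | ha
      · left; intro i; fin_cases i
        · show ε 0 * ucyc B d 0 = vB B d 0
          simp only [ucyc, vB, Matrix.cons_val_zero, Matrix.cons_val_one, Matrix.head_cons, Matrix.cons_val_two, Matrix.tail_cons]
          rw [ha, abs_of_nonneg h12]; ring
        · show ε 1 * ucyc B d 1 = vB B d 1
          simp only [ucyc, vB, Matrix.cons_val_zero, Matrix.cons_val_one, Matrix.head_cons, Matrix.cons_val_two, Matrix.tail_cons]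
          rw [← hεst', ha, abs_of_nonneg h20]; ring
        · show ε 2 * ucyc B d 2 = vB B d 2
          simp only [ucyc, vB, Matrix.cons_val_zero, Matrix.cons_val_one, Matrix.head_cons, Matrix.cons_val_two, Matrix.tail_cons]
          rw [hεm', ha, abs_of_nonpos h01]; ring
      · right; intro i; fin_cases i
        · show ε 0 * ucyc B d 0 = -vB B d 0
          simp only [ucyc, vB, Matrix.cons_val_zero, Matrix.cons_val_one, Matrix.head_cons, Matrix.cons_val_two, Matrix.tail_cons]
          rw [ha, abs_of_nonneg h12]; ring
        · show ε 1 * ucyc B d 1 = -vB B d 1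
          simp only [ucyc, vB, Matrix.cons_val_zero, Matrix.cons_val_one, Matrix.head_cons, Matrix.cons_val_two, Matrix.tail_cons]
          rw [← hεst', ha, abs_of_nonneg h20]; ring
        · show ε 2 * ucyc B d 2 = -vB B d 2
          simp only [ucyc, vB, Matrix.cons_val_zero, Matrix.cons_val_one, Matrix.head_cons, Matrix.cons_val_two, Matrix.tail_cons]
          rw [hεm', ha, abs_of_nonpos h01]; ring
    -- s=0, t=2, m=1
    · have h01 : B 0 1 ≤ 0 := hsrc 1 (by decide)
      have h20 : 0 ≤ B 2 0 := hsink 0 (by decide)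
      have h21 : 0 ≤ B 2 1 := hsink 1 (by decide)
      have h12 : B 1 2 ≤ 0 := skew_nonpos hd h21
      have hεst' : ε 0 = ε 2 := hεst
      have hεm' : ε 1 = -ε 0 := hεm
      rcases hε 0 with ha | ha
      · right; intro i; fin_cases i
        · show ε 0 * ucyc B d 0 = -vB B d 0
          simp only [ucyc, vB, Matrix.cons_val_zero, Matrix.cons_val_one, Matrix.head_cons, Matrix.cons_val_two, Matrix.tail_cons]
          rw [ha, abs_of_nonpos h12]; ring
        · show ε 1 * ucyc B d 1 = -vB B d 1
          simp only [ucyc, vB, Matrix.cons_val_zero, Matrix.cons_val_one, Matrix.head_cons, Matrix.cons_val_two, Matrix.tail_cons]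
          rw [hεm', ha, abs_of_nonneg h20]; ring
        · show ε 2 * ucyc B d 2 = -vB B d 2
          simp only [ucyc, vB, Matrix.cons_val_zero, Matrix.cons_val_one, Matrix.head_cons, Matrix.cons_val_two, Matrix.tail_cons]
          rw [← hεst', ha, abs_of_nonpos h01]; ring
      · left; intro i; fin_cases i
        · show ε 0 * ucyc B d 0 = vB B d 0
          simp only [ucyc, vB, Matrix.cons_val_zero, Matrix.cons_val_one, Matrix.head_cons, Matrix.cons_val_two, Matrix.tail_cons]
          rw [ha, abs_of_nonpos h12]; ring
        · show ε 1 * ucyc B d 1 = vB B d 1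
          simp only [ucyc, vB, Matrix.cons_val_zero, Matrix.cons_val_one, Matrix.head_cons, Matrix.cons_val_two, Matrix.tail_cons]
          rw [hεm', ha, abs_of_nonneg h20]; ring
        · show ε 2 * ucyc B d 2 = vB B d 2
          simp only [ucyc, vB, Matrix.cons_val_zero, Matrix.cons_val_one, Matrix.head_cons, Matrix.cons_val_two, Matrix.tail_cons]
          rw [← hεst', ha, abs_of_nonpos h01]; ring
    -- s=1, t=0, m=2
    · have h12 : B 1 2 ≤ 0 := hsrc 2 (by decide)
      have h01 : 0 ≤ B 0 1 := hsink 1 (by decide)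
      have h02 : 0 ≤ B 0 2 := hsink 2 (by decide)
      have h20 : B 2 0 ≤ 0 := skew_nonpos hd h02
      have hεst' : ε 1 = ε 0 := hεst
      have hεm' : ε 2 = -ε 1 := hεm
      rcases hε 1 with ha | ha
      · right; intro i; fin_cases i
        · show ε 0 * ucyc B d 0 = -vB B d 0
          simp only [ucyc, vB, Matrix.cons_val_zero, Matrix.cons_val_one, Matrix.head_cons, Matrix.cons_val_two, Matrix.tail_cons]
          rw [← hεst', ha, abs_of_nonpos h12]; ring
        · show ε 1 * ucyc B d 1 = -vB B d 1
          simp only [ucyc, vB, Matrix.cons_val_zero, Matrix.cons_val_one, Matrix.head_cons, Matrix.cons_val_two, Matrix.tail_cons]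
          rw [ha, abs_of_nonpos h20]; ring
        · show ε 2 * ucyc B d 2 = -vB B d 2
          simp only [ucyc, vB, Matrix.cons_val_zero, Matrix.cons_val_one, Matrix.head_cons, Matrix.cons_val_two, Matrix.tail_cons]
          rw [hεm', ha, abs_of_nonneg h01]; ring
      · left; intro i; fin_cases i
        · show ε 0 * ucyc B d 0 = vB B d 0
          simp only [ucyc, vB, Matrix.cons_val_zero, Matrix.cons_val_one, Matrix.head_cons, Matrix.cons_val_two, Matrix.tail_cons]
          rw [← hεst', ha, abs_of_nonpos h12]; ring
        · show ε 1 * ucyc B d 1 = vB B d 1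
          simp only [ucyc, vB, Matrix.cons_val_zero, Matrix.cons_val_one, Matrix.head_cons, Matrix.cons_val_two, Matrix.tail_cons]
          rw [ha, abs_of_nonpos h20]; ring
        · show ε 2 * ucyc B d 2 = vB B d 2
          simp only [ucyc, vB, Matrix.cons_val_zero, Matrix.cons_val_one, Matrix.head_cons, Matrix.cons_val_two, Matrix.tail_cons]
          rw [hεm', ha, abs_of_nonneg h01]; ring
    -- s=1, t=2, m=0
    · have h10 : B 1 0 ≤ 0 := hsrc 0 (by decide)
      have h12 : B 1 2 ≤ 0 := hsrc 2 (by decide)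
      have h20 : 0 ≤ B 2 0 := hsink 0 (by decide)
      have h01 : 0 ≤ B 0 1 := skew_nonneg hd h10
      have hεst' : ε 1 = ε 2 := hεst
      have hεm' : ε 0 = -ε 1 := hεm
      rcases hε 1 with ha | ha
      · left; intro i; fin_cases i
        · show ε 0 * ucyc B d 0 = vB B d 0
          simp only [ucyc, vB, Matrix.cons_val_zero, Matrix.cons_val_one, Matrix.head_cons, Matrix.cons_val_two, Matrix.tail_cons]
          rw [hεm', ha, abs_of_nonpos h12]; ring
        · show ε 1 * ucyc B d 1 = vB B d 1
          simp only [ucyc, vB, Matrix.cons_val_zero, Matrix.cons_val_one, Matrix.head_cons, Matrix.cons_val_two, Matrix.tail_cons]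
          rw [ha, abs_of_nonneg h20]; ring
        · show ε 2 * ucyc B d 2 = vB B d 2
          simp only [ucyc, vB, Matrix.cons_val_zero, Matrix.cons_val_one, Matrix.head_cons, Matrix.cons_val_two, Matrix.tail_cons]
          rw [← hεst', ha, abs_of_nonneg h01]; ring
      · right; intro i; fin_cases i
        · show ε 0 * ucyc B d 0 = -vB B d 0
          simp only [ucyc, vB, Matrix.cons_val_zero, Matrix.cons_val_one, Matrix.head_cons, Matrix.cons_val_two, Matrix.tail_cons]
          rw [hεm', ha, abs_of_nonpos h12]; ring
        · show ε 1 * ucyc B d 1 = -vB B d 1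
          simp only [ucyc, vB, Matrix.cons_val_zero, Matrix.cons_val_one, Matrix.head_cons, Matrix.cons_val_two, Matrix.tail_cons]
          rw [ha, abs_of_nonneg h20]; ring
        · show ε 2 * ucyc B d 2 = -vB B d 2
          simp only [ucyc, vB, Matrix.cons_val_zero, Matrix.cons_val_one, Matrix.head_cons, Matrix.cons_val_two, Matrix.tail_cons]
          rw [← hεst', ha, abs_of_nonneg h01]; ring
    -- s=2, t=0, m=1
    · have h20 : B 2 0 ≤ 0 := hsrc 0 (by decide)
      have h21 : B 2 1 ≤ 0 := hsrc 1 (by decide)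
      have h01 : 0 ≤ B 0 1 := hsink 1 (by decide)
      have h12 : 0 ≤ B 1 2 := skew_nonneg hd h21
      have hεst' : ε 2 = ε 0 := hεst
      have hεm' : ε 1 = -ε 2 := hεm
      rcases hε 2 with ha | ha
      · left; intro i; fin_cases i
        · show ε 0 * ucyc B d 0 = vB B d 0
          simp only [ucyc, vB, Matrix.cons_val_zero, Matrix.cons_val_one, Matrix.head_cons, Matrix.cons_val_two, Matrix.tail_cons]
          rw [← hεst', ha, abs_of_nonneg h12]; ring
        · show ε 1 * ucyc B d 1 = vB B d 1
          simp only [ucyc, vB, Matrix.cons_val_zero, Matrix.cons_val_one, Matrix.head_cons, Matrix.cons_val_two, Matrix.tail_cons]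
          rw [hεm', ha, abs_of_nonpos h20]; ring
        · show ε 2 * ucyc B d 2 = vB B d 2
          simp only [ucyc, vB, Matrix.cons_val_zero, Matrix.cons_val_one, Matrix.head_cons, Matrix.cons_val_two, Matrix.tail_cons]
          rw [ha, abs_of_nonneg h01]; ring
      · right; intro i; fin_cases i
        · show ε 0 * ucyc B d 0 = -vB B d 0
          simp only [ucyc, vB, Matrix.cons_val_zero, Matrix.cons_val_one, Matrix.head_cons, Matrix.cons_val_two, Matrix.tail_cons]
          rw [← hεst', ha, abs_of_nonneg h12]; ring
        · show ε 1 * ucyc B d 1 = -vB B d 1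
          simp only [ucyc, vB, Matrix.cons_val_zero, Matrix.cons_val_one, Matrix.head_cons, Matrix.cons_val_two, Matrix.tail_cons]
          rw [hεm', ha, abs_of_nonpos h20]; ring
        · show ε 2 * ucyc B d 2 = -vB B d 2
          simp only [ucyc, vB, Matrix.cons_val_zero, Matrix.cons_val_one, Matrix.head_cons, Matrix.cons_val_two, Matrix.tail_cons]
          rw [ha, abs_of_nonneg h01]; ring
    -- s=2, t=1, m=0
    · have h20 : B 2 0 ≤ 0 := hsrc 0 (by decide)
      have h12 : 0 ≤ B 1 2 := hsink 2 (by decide)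
      have h10 : 0 ≤ B 1 0 := hsink 0 (by decide)
      have h01 : B 0 1 ≤ 0 := skew_nonpos hd h10
      have hεst' : ε 2 = ε 1 := hεst
      have hεm' : ε 0 = -ε 2 := hεm
      rcases hε 2 with ha | ha
      · right; intro i; fin_cases i
        · show ε 0 * ucyc B d 0 = -vB B d 0
          simp only [ucyc, vB, Matrix.cons_val_zero, Matrix.cons_val_one, Matrix.head_cons, Matrix.cons_val_two, Matrix.tail_cons]
          rw [hεm', ha, abs_of_nonneg h12]; ring
        · show ε 1 * ucyc B d 1 = -vB B d 1
          simp only [ucyc, vB, Matrix.cons_val_zero, Matrix.cons_val_one, Matrix.head_cons, Matrix.cons_val_two, Matrix.tail_cons]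
          rw [← hεst', ha, abs_of_nonpos h20]; ring
        · show ε 2 * ucyc B d 2 = -vB B d 2
          simp only [ucyc, vB, Matrix.cons_val_zero, Matrix.cons_val_one, Matrix.head_cons, Matrix.cons_val_two, Matrix.tail_cons]
          rw [ha, abs_of_nonpos h01]; ring
      · left; intro i; fin_cases i
        · show ε 0 * ucyc B d 0 = vB B d 0
          simp only [ucyc, vB, Matrix.cons_val_zero, Matrix.cons_val_one, Matrix.head_cons, Matrix.cons_val_two, Matrix.tail_cons]
          rw [hεm', ha, abs_of_nonneg h12]; ring
        · show ε 1 * ucyc B d 1 = vB B d 1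
          simp only [ucyc, vB, Matrix.cons_val_zero, Matrix.cons_val_one, Matrix.head_cons, Matrix.cons_val_two, Matrix.tail_cons]
          rw [← hεst', ha, abs_of_nonpos h20]; ring
        · show ε 2 * ucyc B d 2 = vB B d 2
          simp only [ucyc, vB, Matrix.cons_val_zero, Matrix.cons_val_one, Matrix.head_cons, Matrix.cons_val_two, Matrix.tail_cons]
          rw [ha, abs_of_nonpos h01]; ring

/-- Transport of the radical coefficient vector through one mutation. -/
def tw (B : Matrix (Fin 3) (Fin 3) ℤ) (k : Fin 3) (ε : ℤ) (w : Fin 3 → ℤ) : Fin 3 → ℤ :=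
  fun i => if i = k then
    -w k - w k * max (ε * B k k) 0 + ∑ j, w j * max (ε * B k j) 0
  else w i

lemma sgn_pm {n : ℕ} (c : Fin n → ℤ) : sgn c = 1 ∨ sgn c = -1 := by
  unfold sgn; split <;> simp

/-- The vector-sum identity for one mutation step. -/
lemma vec_step (B : Matrix (Fin 3) (Fin 3) ℤ) (k : Fin 3) (c : Fin 3 → Fin 3 → ℤ)
    (w : Fin 3 → ℤ) (m : Fin 3) :
    ∑ i, w i * cmut B k c i m = ∑ i, tw B k (sgn (c k)) w i * c i m := by
  have e : ∀ i : Fin 3, cmut B k c i m =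
      if i = k then -c k m else c i m + max (sgn (c k) * B k i) 0 * c k m := by
    intro i
    unfold cmut
    split <;> simp
  have e2 : ∀ i : Fin 3, tw B k (sgn (c k)) w i =
      if i = k then -w k - w k * max (sgn (c k) * B k k) 0 + ∑ j, w j * max (sgn (c k) * B k j) 0
      else w i := fun i => rfl
  rw [Fin.sum_univ_three, Fin.sum_univ_three, e, e, e, e2, e2, e2, Fin.sum_univ_three]
  have hk : ∀ k' : Fin 3, k' = 0 ∨ k' = 1 ∨ k' = 2 := by decide
  rcases hk k with rfl | rfl | rfl
  · rw [if_pos rfl, if_neg (by decide), if_neg (by decide),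
      if_pos rfl, if_neg (by decide), if_neg (by decide)]
    ring
  · rw [if_neg (by decide), if_pos rfl, if_neg (by decide),
      if_neg (by decide), if_pos rfl, if_neg (by decide)]
    ring
  · rw [if_neg (by decide), if_neg (by decide), if_pos rfl,
      if_neg (by decide), if_neg (by decide), if_pos rfl]
    ring

lemma abs_skew {B : Matrix (Fin 3) (Fin 3) ℤ} {d : Fin 3 → ℤ}
    (hd : skewSymmetrizer d B) (i j : Fin 3) : d i * |B i j| = d j * |B j i| := by
  rw [← abs_of_pos (hd.1 i), ← abs_of_pos (hd.1 j), ← abs_mul, ← abs_mul, hd.2 i j, abs_neg]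

lemma transport {B : Matrix (Fin 3) (Fin 3) ℤ} {d : Fin 3 → ℤ} (hd : skewSymmetrizer d B)
    (k : Fin 3) {ε : ℤ} (hε : ε = 1 ∨ ε = -1) {w : Fin 3 → ℤ}
    (habs : ∀ i, |w i| = ucyc (mutate B k) d i)
    (hker : ∀ i, ∑ j, mutate B k i j * w j = 0) :
    (∀ i, ∑ j, B i j * tw B k ε w j = 0) ∧ (∀ i, |tw B k ε w i| = ucyc B d i) := by
  have hk3 : ∀ i : Fin 3, i = 0 ∨ i = 1 ∨ i = 2 := by decide
  rcases hk3 k with rfl | rfl | rfl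
  -- k = 0, p = 1, q = 2
  · -- mutate entry values
    have me00 : mutate B 0 0 0 = -B 0 0 := by unfold mutate; exact if_pos (Or.inl rfl)
    have me01 : mutate B 0 0 1 = -B 0 1 := by unfold mutate; exact if_pos (Or.inl rfl)
    have me02 : mutate B 0 0 2 = -B 0 2 := by unfold mutate; exact if_pos (Or.inl rfl)
    have me10 : mutate B 0 1 0 = -B 1 0 := by unfold mutate; exact if_pos (Or.inr rfl)
    have me11 : mutate B 0 1 1 = B 1 1 + max (B 1 0) 0 * max (B 0 1) 0 - max (-B 1 0) 0 * max (-B 0 1) 0 := by unfold mutate; exact if_neg (by decide)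
    have me12 : mutate B 0 1 2 = B 1 2 + max (B 1 0) 0 * max (B 0 2) 0 - max (-B 1 0) 0 * max (-B 0 2) 0 := by unfold mutate; exact if_neg (by decide)
    have me20 : mutate B 0 2 0 = -B 2 0 := by unfold mutate; exact if_pos (Or.inr rfl)
    have me21 : mutate B 0 2 1 = B 2 1 + max (B 2 0) 0 * max (B 0 1) 0 - max (-B 2 0) 0 * max (-B 0 1) 0 := by unfold mutate; exact if_neg (by decide)
    have me22 : mutate B 0 2 2 = B 2 2 + max (B 2 0) 0 * max (B 0 2) 0 - max (-B 2 0) 0 * max (-B 0 2) 0 := by unfold mutate; exact if_neg (by decide)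
    have tK : tw B 0 ε w 0 = -w 0 - w 0 * max (ε * B 0 0) 0 + (w 0 * max (ε * B 0 0) 0 + w 1 * max (ε * B 0 1) 0 + w 2 * max (ε * B 0 2) 0) := by
      unfold tw; rw [if_pos rfl, Fin.sum_univ_three]
    have tp : tw B 0 ε w 1 = w 1 := by unfold tw; exact if_neg (by decide)
    have tq : tw B 0 ε w 2 = w 2 := by unfold tw; exact if_neg (by decide)
    have hK := hker 0
    have hp := hker 1
    have hq := hker 2
    rw [Fin.sum_univ_three, me00, me01, me02] at hK
    rw [Fin.sum_univ_three, me10, me11, me12] at hp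
    rw [Fin.sum_univ_three, me20, me21, me22] at hq
    have hdK : B 0 0 = 0 := skew_diag hd 0
    have hdp : B 1 1 = 0 := skew_diag hd 1
    have hdq : B 2 2 = 0 := skew_diag hd 2
    have hkerN : ∀ i, ∑ j, B i j * tw B 0 ε w j = 0 := by
      intro i
      rcases hk3 i with rfl | rfl | rfl
      · rw [Fin.sum_univ_three, tp, tq]
        linear_combination (-1 : ℤ) * hK + (tw B 0 ε w 0 - w 0) * hdK
      · rw [Fin.sum_univ_three, tK, tp, tq]
        linear_combination hp - w 1 * (mm hε (B 1 0) (B 0 1)) - w 2 * (mm hε (B 1 0) (B 0 2)) + (B 1 0 * w 1) * (mdiff hε (B 0 1)) + (B 1 0 * w 2) * (mdiff hε (B 0 2)) - (ε * B 1 0 - max (ε * B 1 0) 0) * hK - ((ε * B 1 0 - max (ε * B 1 0) 0) * w 0) * hdK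
      · rw [Fin.sum_univ_three, tK, tp, tq]
        linear_combination hq - w 1 * (mm hε (B 2 0) (B 0 1)) - w 2 * (mm hε (B 2 0) (B 0 2)) + (B 2 0 * w 1) * (mdiff hε (B 0 1)) + (B 2 0 * w 2) * (mdiff hε (B 0 2)) - (ε * B 2 0 - max (ε * B 2 0) 0) * hK - ((ε * B 2 0 - max (ε * B 2 0) 0) * w 0) * hdK
    refine ⟨hkerN, ?_⟩
    intro i
    rcases hk3 i with rfl | rfl | rfl
    · by_cases hBpK : B 1 0 = 0
      · by_cases hBqK : B 2 0 = 0
        · have hKp : B 0 1 = 0 := skew_zero hd hBpK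
          have hKq : B 0 2 = 0 := skew_zero hd hBqK
          have hT : tw B 0 ε w 0 = -w 0 := by rw [tK, hKp, hKq, hdK]; simp
          rw [hT, abs_neg, habs 0]
          simp only [ucyc, Matrix.cons_val_zero, Matrix.cons_val_one, Matrix.head_cons, Matrix.cons_val_two, Matrix.tail_cons]
          rw [me12, hBpK]
          simp
        · -- use row q
          have hrow := hkerN 2
          rw [Fin.sum_univ_three, tp, tq] at hrow
          have key : B 2 0 * tw B 0 ε w 0 = -(B 2 1 * w 1) := by
            linear_combination hrow - w 2 * hdq
          have h1 : |B 2 0| * |tw B 0 ε w 0| = |B 2 1| * |w 1| := by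
            rw [← abs_mul, key, abs_neg, abs_mul]
          have h2 : |w 1| = d 2 * |B 2 0| := by
            rw [habs 1]
            simp only [ucyc, Matrix.cons_val_zero, Matrix.cons_val_one, Matrix.head_cons, Matrix.cons_val_two, Matrix.tail_cons]
            rw [me20, abs_neg]
          have h3 : d 2 * |B 2 1| = d 1 * |B 1 2| := abs_skew hd 2 1
          apply mul_left_cancel₀ (abs_ne_zero.2 hBqK)
          rw [h1, h2]
          simp only [ucyc, Matrix.cons_val_zero, Matrix.cons_val_one, Matrix.head_cons, Matrix.cons_val_two, Matrix.tail_cons]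
          linear_combination |B 2 0| * h3
      · -- use row p
        have hrow := hkerN 1
        rw [Fin.sum_univ_three, tp, tq] at hrow
        have key : B 1 0 * tw B 0 ε w 0 = -(B 1 2 * w 2) := by
          linear_combination hrow - w 1 * hdp
        have h1 : |B 1 0| * |tw B 0 ε w 0| = |B 1 2| * |w 2| := by
          rw [← abs_mul, key, abs_neg, abs_mul]
        have h2 : |w 2| = d 0 * |B 0 1| := by
          rw [habs 2]
          simp only [ucyc, Matrix.cons_val_zero, Matrix.cons_val_one, Matrix.head_cons, Matrix.cons_val_two, Matrix.tail_cons]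
          rw [me01, abs_neg]
        have h3 : d 0 * |B 0 1| = d 1 * |B 1 0| := abs_skew hd 0 1
        apply mul_left_cancel₀ (abs_ne_zero.2 hBpK)
        rw [h1, h2, h3]
        simp only [ucyc, Matrix.cons_val_zero, Matrix.cons_val_one, Matrix.head_cons, Matrix.cons_val_two, Matrix.tail_cons]
        ring
    · rw [tp, habs 1]
      simp only [ucyc, Matrix.cons_val_zero, Matrix.cons_val_one, Matrix.head_cons, Matrix.cons_val_two, Matrix.tail_cons]
      rw [me20, abs_neg]
    · rw [tq, habs 2]
      simp only [ucyc, Matrix.cons_val_zero, Matrix.cons_val_one, Matrix.head_cons, Matrix.cons_val_two, Matrix.tail_cons]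
      rw [me01, abs_neg]
  -- k = 1, p = 2, q = 0
  · -- mutate entry values
    have me00 : mutate B 1 0 0 = B 0 0 + max (B 0 1) 0 * max (B 1 0) 0 - max (-B 0 1) 0 * max (-B 1 0) 0 := by unfold mutate; exact if_neg (by decide)
    have me01 : mutate B 1 0 1 = -B 0 1 := by unfold mutate; exact if_pos (Or.inr rfl)
    have me02 : mutate B 1 0 2 = B 0 2 + max (B 0 1) 0 * max (B 1 2) 0 - max (-B 0 1) 0 * max (-B 1 2) 0 := by unfold mutate; exact if_neg (by decide)
    have me10 : mutate B 1 1 0 = -B 1 0 := by unfold mutate; exact if_pos (Or.inl rfl)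
    have me11 : mutate B 1 1 1 = -B 1 1 := by unfold mutate; exact if_pos (Or.inl rfl)
    have me12 : mutate B 1 1 2 = -B 1 2 := by unfold mutate; exact if_pos (Or.inl rfl)
    have me20 : mutate B 1 2 0 = B 2 0 + max (B 2 1) 0 * max (B 1 0) 0 - max (-B 2 1) 0 * max (-B 1 0) 0 := by unfold mutate; exact if_neg (by decide)
    have me21 : mutate B 1 2 1 = -B 2 1 := by unfold mutate; exact if_pos (Or.inr rfl)
    have me22 : mutate B 1 2 2 = B 2 2 + max (B 2 1) 0 * max (B 1 2) 0 - max (-B 2 1) 0 * max (-B 1 2) 0 := by unfold mutate; exact if_neg (by decide)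
    have tK : tw B 1 ε w 1 = -w 1 - w 1 * max (ε * B 1 1) 0 + (w 0 * max (ε * B 1 0) 0 + w 1 * max (ε * B 1 1) 0 + w 2 * max (ε * B 1 2) 0) := by
      unfold tw; rw [if_pos rfl, Fin.sum_univ_three]
    have tp : tw B 1 ε w 2 = w 2 := by unfold tw; exact if_neg (by decide)
    have tq : tw B 1 ε w 0 = w 0 := by unfold tw; exact if_neg (by decide)
    have hK := hker 1
    have hp := hker 2
    have hq := hker 0
    rw [Fin.sum_univ_three, me10, me11, me12] at hK
    rw [Fin.sum_univ_three, me20, me21, me22] at hp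
    rw [Fin.sum_univ_three, me00, me01, me02] at hq
    have hdK : B 1 1 = 0 := skew_diag hd 1
    have hdp : B 2 2 = 0 := skew_diag hd 2
    have hdq : B 0 0 = 0 := skew_diag hd 0
    have hkerN : ∀ i, ∑ j, B i j * tw B 1 ε w j = 0 := by
      intro i
      rcases hk3 i with rfl | rfl | rfl
      · rw [Fin.sum_univ_three, tK, tp, tq]
        linear_combination hq - w 2 * (mm hε (B 0 1) (B 1 2)) - w 0 * (mm hε (B 0 1) (B 1 0)) + (B 0 1 * w 2) * (mdiff hε (B 1 2)) + (B 0 1 * w 0) * (mdiff hε (B 1 0)) - (ε * B 0 1 - max (ε * B 0 1) 0) * hK - ((ε * B 0 1 - max (ε * B 0 1) 0) * w 1) * hdK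
      · rw [Fin.sum_univ_three, tp, tq]
        linear_combination (-1 : ℤ) * hK + (tw B 1 ε w 1 - w 1) * hdK
      · rw [Fin.sum_univ_three, tK, tp, tq]
        linear_combination hp - w 2 * (mm hε (B 2 1) (B 1 2)) - w 0 * (mm hε (B 2 1) (B 1 0)) + (B 2 1 * w 2) * (mdiff hε (B 1 2)) + (B 2 1 * w 0) * (mdiff hε (B 1 0)) - (ε * B 2 1 - max (ε * B 2 1) 0) * hK - ((ε * B 2 1 - max (ε * B 2 1) 0) * w 1) * hdK
    refine ⟨hkerN, ?_⟩
    intro i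
    rcases hk3 i with rfl | rfl | rfl
    · rw [tq, habs 0]
      simp only [ucyc, Matrix.cons_val_zero, Matrix.cons_val_one, Matrix.head_cons, Matrix.cons_val_two, Matrix.tail_cons]
      rw [me12, abs_neg]
    · by_cases hBpK : B 2 1 = 0
      · by_cases hBqK : B 0 1 = 0
        · have hKp : B 1 2 = 0 := skew_zero hd hBpK
          have hKq : B 1 0 = 0 := skew_zero hd hBqK
          have hT : tw B 1 ε w 1 = -w 1 := by rw [tK, hKp, hKq, hdK]; simp
          rw [hT, abs_neg, habs 1]
          simp only [ucyc, Matrix.cons_val_zero, Matrix.cons_val_one, Matrix.head_cons, Matrix.cons_val_two, Matrix.tail_cons]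
          rw [me20, hBpK]
          simp
        · -- use row q
          have hrow := hkerN 0
          rw [Fin.sum_univ_three, tp, tq] at hrow
          have key : B 0 1 * tw B 1 ε w 1 = -(B 0 2 * w 2) := by
            linear_combination hrow - w 0 * hdq
          have h1 : |B 0 1| * |tw B 1 ε w 1| = |B 0 2| * |w 2| := by
            rw [← abs_mul, key, abs_neg, abs_mul]
          have h2 : |w 2| = d 0 * |B 0 1| := by
            rw [habs 2]
            simp only [ucyc, Matrix.cons_val_zero, Matrix.cons_val_one, Matrix.head_cons, Matrix.cons_val_two, Matrix.tail_cons]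
            rw [me01, abs_neg]
          have h3 : d 0 * |B 0 2| = d 2 * |B 2 0| := abs_skew hd 0 2
          apply mul_left_cancel₀ (abs_ne_zero.2 hBqK)
          rw [h1, h2]
          simp only [ucyc, Matrix.cons_val_zero, Matrix.cons_val_one, Matrix.head_cons, Matrix.cons_val_two, Matrix.tail_cons]
          linear_combination |B 0 1| * h3
      · -- use row p
        have hrow := hkerN 2
        rw [Fin.sum_univ_three, tp, tq] at hrow
        have key : B 2 1 * tw B 1 ε w 1 = -(B 2 0 * w 0) := by
          linear_combination hrow - w 2 * hdp
        have h1 : |B 2 1| * |tw B 1 ε w 1| = |B 2 0| * |w 0| := by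
          rw [← abs_mul, key, abs_neg, abs_mul]
        have h2 : |w 0| = d 1 * |B 1 2| := by
          rw [habs 0]
          simp only [ucyc, Matrix.cons_val_zero, Matrix.cons_val_one, Matrix.head_cons, Matrix.cons_val_two, Matrix.tail_cons]
          rw [me12, abs_neg]
        have h3 : d 1 * |B 1 2| = d 2 * |B 2 1| := abs_skew hd 1 2
        apply mul_left_cancel₀ (abs_ne_zero.2 hBpK)
        rw [h1, h2, h3]
        simp only [ucyc, Matrix.cons_val_zero, Matrix.cons_val_one, Matrix.head_cons, Matrix.cons_val_two, Matrix.tail_cons]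
        ring
    · rw [tp, habs 2]
      simp only [ucyc, Matrix.cons_val_zero, Matrix.cons_val_one, Matrix.head_cons, Matrix.cons_val_two, Matrix.tail_cons]
      rw [me01, abs_neg]
  -- k = 2, p = 0, q = 1
  · -- mutate entry values
    have me00 : mutate B 2 0 0 = B 0 0 + max (B 0 2) 0 * max (B 2 0) 0 - max (-B 0 2) 0 * max (-B 2 0) 0 := by unfold mutate; exact if_neg (by decide)
    have me01 : mutate B 2 0 1 = B 0 1 + max (B 0 2) 0 * max (B 2 1) 0 - max (-B 0 2) 0 * max (-B 2 1) 0 := by unfold mutate; exact if_neg (by decide)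
    have me02 : mutate B 2 0 2 = -B 0 2 := by unfold mutate; exact if_pos (Or.inr rfl)
    have me10 : mutate B 2 1 0 = B 1 0 + max (B 1 2) 0 * max (B 2 0) 0 - max (-B 1 2) 0 * max (-B 2 0) 0 := by unfold mutate; exact if_neg (by decide)
    have me11 : mutate B 2 1 1 = B 1 1 + max (B 1 2) 0 * max (B 2 1) 0 - max (-B 1 2) 0 * max (-B 2 1) 0 := by unfold mutate; exact if_neg (by decide)
    have me12 : mutate B 2 1 2 = -B 1 2 := by unfold mutate; exact if_pos (Or.inr rfl)
    have me20 : mutate B 2 2 0 = -B 2 0 := by unfold mutate; exact if_pos (Or.inl rfl)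
    have me21 : mutate B 2 2 1 = -B 2 1 := by unfold mutate; exact if_pos (Or.inl rfl)
    have me22 : mutate B 2 2 2 = -B 2 2 := by unfold mutate; exact if_pos (Or.inl rfl)
    have tK : tw B 2 ε w 2 = -w 2 - w 2 * max (ε * B 2 2) 0 + (w 0 * max (ε * B 2 0) 0 + w 1 * max (ε * B 2 1) 0 + w 2 * max (ε * B 2 2) 0) := by
      unfold tw; rw [if_pos rfl, Fin.sum_univ_three]
    have tp : tw B 2 ε w 0 = w 0 := by unfold tw; exact if_neg (by decide)
    have tq : tw B 2 ε w 1 = w 1 := by unfold tw; exact if_neg (by decide)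
    have hK := hker 2
    have hp := hker 0
    have hq := hker 1
    rw [Fin.sum_univ_three, me20, me21, me22] at hK
    rw [Fin.sum_univ_three, me00, me01, me02] at hp
    rw [Fin.sum_univ_three, me10, me11, me12] at hq
    have hdK : B 2 2 = 0 := skew_diag hd 2
    have hdp : B 0 0 = 0 := skew_diag hd 0
    have hdq : B 1 1 = 0 := skew_diag hd 1
    have hkerN : ∀ i, ∑ j, B i j * tw B 2 ε w j = 0 := by
      intro i
      rcases hk3 i with rfl | rfl | rfl
      · rw [Fin.sum_univ_three, tK, tp, tq]
        linear_combination hp - w 0 * (mm hε (B 0 2) (B 2 0)) - w 1 * (mm hε (B 0 2) (B 2 1)) + (B 0 2 * w 0) * (mdiff hε (B 2 0)) + (B 0 2 * w 1) * (mdiff hε (B 2 1)) - (ε * B 0 2 - max (ε * B 0 2) 0) * hK - ((ε * B 0 2 - max (ε * B 0 2) 0) * w 2) * hdK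
      · rw [Fin.sum_univ_three, tK, tp, tq]
        linear_combination hq - w 0 * (mm hε (B 1 2) (B 2 0)) - w 1 * (mm hε (B 1 2) (B 2 1)) + (B 1 2 * w 0) * (mdiff hε (B 2 0)) + (B 1 2 * w 1) * (mdiff hε (B 2 1)) - (ε * B 1 2 - max (ε * B 1 2) 0) * hK - ((ε * B 1 2 - max (ε * B 1 2) 0) * w 2) * hdK
      · rw [Fin.sum_univ_three, tp, tq]
        linear_combination (-1 : ℤ) * hK + (tw B 2 ε w 2 - w 2) * hdK
    refine ⟨hkerN, ?_⟩
    intro i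
    rcases hk3 i with rfl | rfl | rfl
    · rw [tp, habs 0]
      simp only [ucyc, Matrix.cons_val_zero, Matrix.cons_val_one, Matrix.head_cons, Matrix.cons_val_two, Matrix.tail_cons]
      rw [me12, abs_neg]
    · rw [tq, habs 1]
      simp only [ucyc, Matrix.cons_val_zero, Matrix.cons_val_one, Matrix.head_cons, Matrix.cons_val_two, Matrix.tail_cons]
      rw [me20, abs_neg]
    · by_cases hBpK : B 0 2 = 0
      · by_cases hBqK : B 1 2 = 0
        · have hKp : B 2 0 = 0 := skew_zero hd hBpK
          have hKq : B 2 1 = 0 := skew_zero hd hBqK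
          have hT : tw B 2 ε w 2 = -w 2 := by rw [tK, hKp, hKq, hdK]; simp
          rw [hT, abs_neg, habs 2]
          simp only [ucyc, Matrix.cons_val_zero, Matrix.cons_val_one, Matrix.head_cons, Matrix.cons_val_two, Matrix.tail_cons]
          rw [me01, hBpK]
          simp
        · -- use row q
          have hrow := hkerN 1
          rw [Fin.sum_univ_three, tp, tq] at hrow
          have key : B 1 2 * tw B 2 ε w 2 = -(B 1 0 * w 0) := by
            linear_combination hrow - w 1 * hdq
          have h1 : |B 1 2| * |tw B 2 ε w 2| = |B 1 0| * |w 0| := by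
            rw [← abs_mul, key, abs_neg, abs_mul]
          have h2 : |w 0| = d 1 * |B 1 2| := by
            rw [habs 0]
            simp only [ucyc, Matrix.cons_val_zero, Matrix.cons_val_one, Matrix.head_cons, Matrix.cons_val_two, Matrix.tail_cons]
            rw [me12, abs_neg]
          have h3 : d 1 * |B 1 0| = d 0 * |B 0 1| := abs_skew hd 1 0
          apply mul_left_cancel₀ (abs_ne_zero.2 hBqK)
          rw [h1, h2]
          simp only [ucyc, Matrix.cons_val_zero, Matrix.cons_val_one, Matrix.head_cons, Matrix.cons_val_two, Matrix.tail_cons]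
          linear_combination |B 1 2| * h3
      · -- use row p
        have hrow := hkerN 0
        rw [Fin.sum_univ_three, tp, tq] at hrow
        have key : B 0 2 * tw B 2 ε w 2 = -(B 0 1 * w 1) := by
          linear_combination hrow - w 0 * hdp
        have h1 : |B 0 2| * |tw B 2 ε w 2| = |B 0 1| * |w 1| := by
          rw [← abs_mul, key, abs_neg, abs_mul]
        have h2 : |w 1| = d 2 * |B 2 0| := by
          rw [habs 1]
          simp only [ucyc, Matrix.cons_val_zero, Matrix.cons_val_one, Matrix.head_cons, Matrix.cons_val_two, Matrix.tail_cons]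
          rw [me20, abs_neg]
        have h3 : d 2 * |B 2 0| = d 0 * |B 0 2| := abs_skew hd 2 0
        apply mul_left_cancel₀ (abs_ne_zero.2 hBpK)
        rw [h1, h2, h3]
        simp only [ucyc, Matrix.cons_val_zero, Matrix.cons_val_one, Matrix.head_cons, Matrix.cons_val_two, Matrix.tail_cons]
        ring

lemma foldl_skew {d : Fin 3 → ℤ} (l : List (Fin 3))
    (s : (Fin 3 → Fin 3 → ℤ) × Matrix (Fin 3) (Fin 3) ℤ)
    (hs : skewSymmetrizer d s.2) : skewSymmetrizer d ((l.foldl ymut s).2) := by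
  induction l generalizing s with
  | nil => exact hs
  | cons a l ih => exact ih (ymut s a) (skew_mutate hs a)

lemma main_aux {B : Matrix (Fin 3) (Fin 3) ℤ} {d : Fin 3 → ℤ} (hd : skewSymmetrizer d B)
    (l : List (Fin 3)) :
    ∀ (w : Fin 3 → ℤ),
      (∀ i, |w i| = ucyc (l.foldl ymut (stdc 3, B)).2 d i) →
      (∀ i, ∑ j, (l.foldl ymut (stdc 3, B)).2 i j * w j = 0) →
      ∃ w0 : Fin 3 → ℤ, (∀ i, |w0 i| = ucyc B d i) ∧ (∀ i, ∑ j, B i j * w0 j = 0) ∧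
        ∀ m, ∑ i, w i * (l.foldl ymut (stdc 3, B)).1 i m = w0 m := by
  induction l using List.reverseRecOn with
  | nil =>
    intro w habs hker
    refine ⟨w, habs, hker, ?_⟩
    intro m
    show ∑ i, w i * stdc 3 i m = w m
    rw [Fin.sum_univ_three]
    unfold stdc
    fin_cases m <;> simp
  | append_singleton l k ih =>
    intro w habs hker
    rw [List.foldl_append] at habs hker ⊢
    simp only [List.foldl_cons, List.foldl_nil] at habs hker ⊢
    have hskew : skewSymmetrizer d (l.foldl ymut (stdc 3, B)).2 := foldl_skew l _ hd
    have habs' : ∀ i, |w i| = ucyc (mutate (l.foldl ymut (stdc 3, B)).2 k) d i := habs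
    have hker' : ∀ i, ∑ j, (mutate (l.foldl ymut (stdc 3, B)).2 k) i j * w j = 0 := hker
    have htr := transport hskew k (sgn_pm ((l.foldl ymut (stdc 3, B)).1 k)) habs' hker'
    obtain ⟨w0, h1, h2, h3⟩ := ih
      (tw (l.foldl ymut (stdc 3, B)).2 k (sgn ((l.foldl ymut (stdc 3, B)).1 k)) w) htr.2 htr.1
    refine ⟨w0, h1, h2, ?_⟩
    intro m
    have hv := vec_step (l.foldl ymut (stdc 3, B)).2 k (l.foldl ymut (stdc 3, B)).1 w m
    calc ∑ i, w i * (ymut (l.foldl ymut (stdc 3, B)) k).1 i m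
        = ∑ i, tw (l.foldl ymut (stdc 3, B)).2 k (sgn ((l.foldl ymut (stdc 3, B)).1 k)) w i *
            (l.foldl ymut (stdc 3, B)).1 i m := hv
      _ = w0 m := h3 m

theorem radical_invariance_up_to_sign (B : Matrix (Fin 3) (Fin 3) ℤ)
    (d : Fin 3 → ℤ) (hd : skewSymmetrizer d B)
    (l : List (Fin 3))
    (hsc : ∀ j ≤ l.length, ∀ i, signCoherent (((l.take j).foldl ymut (stdc 3, B)).1 i))
    (u u' : Fin 3 → ℤ)
    (hu : uChoice B d u)
    (hu' : uChoice (l.foldl ymut (stdc 3, B)).2 d u') :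
    (fun m => ∑ i, u' i * (l.foldl ymut (stdc 3, B)).1 i m) = u ∨
      (fun m => ∑ i, u' i * (l.foldl ymut (stdc 3, B)).1 i m) = (fun m => -u m) := by
  have hdf : skewSymmetrizer d (l.foldl ymut (stdc 3, B)).2 := foldl_skew l _ hd
  have hu'v := uchoice_eq_v hdf hu'
  have habs : ∀ i, |u' i| = ucyc (l.foldl ymut (stdc 3, B)).2 d i := by
    rcases hu'v with h | h
    · intro i; rw [h i]; exact abs_v hdf i
    · intro i; rw [h i, abs_neg]; exact abs_v hdf i
  have hker : ∀ i, ∑ j, (l.foldl ymut (stdc 3, B)).2 i j * u' j = 0 := by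
    rcases hu'v with h | h
    · intro i
      rw [show u' = vB (l.foldl ymut (stdc 3, B)).2 d from funext h]
      exact kernel_v hdf i
    · intro i
      rw [show u' = fun j => -vB (l.foldl ymut (stdc 3, B)).2 d j from funext h]
      simp only [mul_neg]
      rw [Finset.sum_neg_distrib, kernel_v hdf i, neg_zero]
  obtain ⟨w0, hw0abs, hw0ker, hw0vec⟩ := main_aux hd l u' habs hker
  have huv := uchoice_eq_v hd hu
  have huabs : ∀ i, |u i| = ucyc B d i := by
    rcases huv with h | h
    · intro i; rw [h i]; exact abs_v hd i
    · intro i; rw [h i, abs_neg]; exact abs_v hd i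
  have huker : ∀ i, ∑ j, B i j * u j = 0 := by
    rcases huv with h | h
    · intro i
      rw [show u = vB B d from funext h]
      exact kernel_v hd i
    · intro i
      rw [show u = fun j => -vB B d j from funext h]
      simp only [mul_neg]
      rw [Finset.sum_neg_distrib, kernel_v hd i, neg_zero]
  rcases Kuniq hd hw0abs huabs hw0ker huker with h | h
  · left; funext m; rw [hw0vec m, h m]
  · right; funext m; rw [hw0vec m, h m]
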